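/- In JIK, for any satisfier μ, proof term t and formulas A, B, C, if (A→(B→C)) is a theorem, then there is a proof term u with JIK ⊢ (μ:A→t:B) → u:(A→C); in particular, from jk4 and lifting, JIK proves (μ:Λ₁ → t:(Λ₂→Π)) → u:((Λ₁∧Λ₂)→Π) for some proof term u depending on μ▷t. -/
import Mathlib


namespace JIKPaper

-- Proof terms and satisfiers for intuitionistic justification logic.
mutual
inductive PrfTm : Type
  | pvar : Nat → PrfTm
  | pconst : Nat → PrfTm
  | sum : PrfTm → PrfTm → PrfTm
  | app : PrfTm → PrfTm → PrfTm
  | upd : SatTm → PrfTm → PrfTm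
  | bang : PrfTm → PrfTm
inductive SatTm : Type
  | svar : Nat → SatTm
  | uni : SatTm → SatTm → SatTm
  | prop : PrfTm → SatTm → SatTm
end

/-- Justification formulas. -/
inductive JForm : Type
  | bot : JForm
  | atom : Nat → JForm
  | and : JForm → JForm → JForm
  | or : JForm → JForm → JForm
  | impl : JForm → JForm → JForm
  | jst : PrfTm → JForm → JForm
  | sat : SatTm → JForm → JForm

/-- Intuitionistic modal formulas. -/
inductive MForm : Type
  | bot : MForm
  | atom : Nat → MForm
  | and : MForm → MForm → MForm
  | or : MForm → MForm → MForm
  | impl : MForm → MForm → MForm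
  | box : MForm → MForm
  | dia : MForm → MForm

/-- Axiom instances of the justification logics JIK (false,false), JIKt (true,false),
JIK4 (false,true), JIS4 (true,true): intuitionistic propositional axioms, jk1–jk5,
sum axioms, and optionally the jt and j4 axioms. -/
inductive JAx : Bool → Bool → JForm → Prop
  | ax1 {hT h4 : Bool} {A B : JForm} : JAx hT h4 (A.impl (B.impl A))
  | ax2 {hT h4 : Bool} {A B C : JForm} :
      JAx hT h4 ((A.impl (B.impl C)).impl ((A.impl B).impl (A.impl C)))
  | andI {hT h4 : Bool} {A B : JForm} : JAx hT h4 (A.impl (B.impl (A.and B)))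
  | andE1 {hT h4 : Bool} {A B : JForm} : JAx hT h4 ((A.and B).impl A)
  | andE2 {hT h4 : Bool} {A B : JForm} : JAx hT h4 ((A.and B).impl B)
  | orI1 {hT h4 : Bool} {A B : JForm} : JAx hT h4 (A.impl (A.or B))
  | orI2 {hT h4 : Bool} {A B : JForm} : JAx hT h4 (B.impl (A.or B))
  | orE {hT h4 : Bool} {A B C : JForm} :
      JAx hT h4 ((A.impl C).impl ((B.impl C).impl ((A.or B).impl C)))
  | exf {hT h4 : Bool} {A : JForm} : JAx hT h4 (JForm.bot.impl A)
  | jk1 {hT h4 : Bool} {s t : PrfTm} {A B : JForm} :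
      JAx hT h4 ((JForm.jst s (A.impl B)).impl
        ((JForm.jst t A).impl (JForm.jst (PrfTm.app s t) B)))
  | jk2 {hT h4 : Bool} {s : PrfTm} {μ : SatTm} {A B : JForm} :
      JAx hT h4 ((JForm.jst s (A.impl B)).impl
        ((JForm.sat μ A).impl (JForm.sat (SatTm.prop s μ) B)))
  | jk3 {hT h4 : Bool} {μ : SatTm} {A B : JForm} :
      JAx hT h4 ((JForm.sat μ (A.or B)).impl ((JForm.sat μ A).or (JForm.sat μ B)))
  | jk4 {hT h4 : Bool} {μ : SatTm} {t : PrfTm} {A B : JForm} :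
      JAx hT h4 (((JForm.sat μ A).impl (JForm.jst t B)).impl
        (JForm.jst (PrfTm.upd μ t) (A.impl B)))
  | jk5 {hT h4 : Bool} {μ : SatTm} :
      JAx hT h4 ((JForm.sat μ JForm.bot).impl JForm.bot)
  | sum1 {hT h4 : Bool} {s t : PrfTm} {A : JForm} :
      JAx hT h4 ((JForm.jst s A).impl (JForm.jst (PrfTm.sum s t) A))
  | sum2 {hT h4 : Bool} {s t : PrfTm} {A : JForm} :
      JAx hT h4 ((JForm.jst t A).impl (JForm.jst (PrfTm.sum s t) A))
  | uni1 {hT h4 : Bool} {μ ν : SatTm} {A : JForm} :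
      JAx hT h4 ((JForm.sat μ A).impl (JForm.sat (SatTm.uni μ ν) A))
  | uni2 {hT h4 : Bool} {μ ν : SatTm} {A : JForm} :
      JAx hT h4 ((JForm.sat ν A).impl (JForm.sat (SatTm.uni μ ν) A))
  | jtBox {h4 : Bool} {t : PrfTm} {A : JForm} : JAx true h4 ((JForm.jst t A).impl A)
  | jtDia {h4 : Bool} {μ : SatTm} {A : JForm} : JAx true h4 (A.impl (JForm.sat μ A))
  | j4Box {hT : Bool} {t : PrfTm} {A : JForm} :
      JAx hT true ((JForm.jst t A).impl (JForm.jst (PrfTm.bang t) (JForm.jst t A)))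
  | j4Dia {hT : Bool} {μ ν : SatTm} {A : JForm} :
      JAx hT true ((JForm.sat μ (JForm.sat ν A)).impl (JForm.sat ν A))

/-- `cₙ:⋯:c₁:A` for a list of constants. -/
def canChain (cs : List Nat) (A : JForm) : JForm :=
  cs.foldr (fun c B => JForm.jst (PrfTm.pconst c) B) A

/-- Theorems of the justification logic: closure of the axioms under modus ponens and
the constant axiom necessitation rule (with the empty chain giving the axioms). -/
inductive JThm (hT h4 : Bool) : JForm → Prop
  | can {A : JForm} (cs : List Nat) : JAx hT h4 A → JThm hT h4 (canChain cs A)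
  | mp {A B : JForm} : JThm hT h4 (A.impl B) → JThm hT h4 A → JThm hT h4 B

/-- Axiom instances of IK (false,false), IKt (true,false), IK4 (false,true), IS4 (true,true). -/
inductive MAx : Bool → Bool → MForm → Prop
  | ax1 {hT h4 : Bool} {A B : MForm} : MAx hT h4 (A.impl (B.impl A))
  | ax2 {hT h4 : Bool} {A B C : MForm} :
      MAx hT h4 ((A.impl (B.impl C)).impl ((A.impl B).impl (A.impl C)))
  | andI {hT h4 : Bool} {A B : MForm} : MAx hT h4 (A.impl (B.impl (A.and B)))
  | andE1 {hT h4 : Bool} {A B : MForm} : MAx hT h4 ((A.and B).impl A)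
  | andE2 {hT h4 : Bool} {A B : MForm} : MAx hT h4 ((A.and B).impl B)
  | orI1 {hT h4 : Bool} {A B : MForm} : MAx hT h4 (A.impl (A.or B))
  | orI2 {hT h4 : Bool} {A B : MForm} : MAx hT h4 (B.impl (A.or B))
  | orE {hT h4 : Bool} {A B C : MForm} :
      MAx hT h4 ((A.impl C).impl ((B.impl C).impl ((A.or B).impl C)))
  | exf {hT h4 : Bool} {A : MForm} : MAx hT h4 (MForm.bot.impl A)
  | k1 {hT h4 : Bool} {A B : MForm} :
      MAx hT h4 ((A.impl B).box.impl (A.box.impl B.box))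
  | k2 {hT h4 : Bool} {A B : MForm} :
      MAx hT h4 ((A.impl B).box.impl (A.dia.impl B.dia))
  | k3 {hT h4 : Bool} {A B : MForm} :
      MAx hT h4 ((A.or B).dia.impl (A.dia.or B.dia))
  | k4 {hT h4 : Bool} {A B : MForm} :
      MAx hT h4 ((A.dia.impl B.box).impl (A.impl B).box)
  | k5 {hT h4 : Bool} : MAx hT h4 (MForm.bot.dia.impl MForm.bot)
  | tBox {h4 : Bool} {A : MForm} : MAx true h4 (A.box.impl A)
  | tDia {h4 : Bool} {A : MForm} : MAx true h4 (A.impl A.dia)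
  | fourBox {hT : Bool} {A : MForm} : MAx hT true (A.box.impl A.box.box)
  | fourDia {hT : Bool} {A : MForm} : MAx hT true (A.dia.dia.impl A.dia)

/-- Theorems of the intuitionistic modal logic: modus ponens and necessitation. -/
inductive MThm (hT h4 : Bool) : MForm → Prop
  | ax {A : MForm} : MAx hT h4 A → MThm hT h4 A
  | mp {A B : MForm} : MThm hT h4 (A.impl B) → MThm hT h4 A → MThm hT h4 B
  | nec {A : MForm} : MThm hT h4 A → MThm hT h4 A.box

/-- The forgetful projection from justification formulas to modal formulas. -/
def forget : JForm → MForm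
  | .bot => .bot
  | .atom n => .atom n
  | .and A B => .and (forget A) (forget B)
  | .or A B => .or (forget A) (forget B)
  | .impl A B => .impl (forget A) (forget B)
  | .jst _ A => .box (forget A)
  | .sat _ A => .dia (forget A)


section Helpers
variable {hT h4 : Bool}

/-- Axioms are theorems (empty constant chain). -/
lemma jax_thm {A : JForm} (h : JAx hT h4 A) : JThm hT h4 A :=
  JThm.can [] h

/-- Identity. -/
lemma jthm_id (A : JForm) : JThm hT h4 (A.impl A) :=
  JThm.mp (JThm.mp (jax_thm JAx.ax2) (jax_thm (JAx.ax1 (B := A.impl A))))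
    (jax_thm (JAx.ax1 (B := A)))

/-- Hypothetical syllogism. -/
lemma jthm_syll {A B C : JForm} (h1 : JThm hT h4 (A.impl B))
    (h2 : JThm hT h4 (B.impl C)) : JThm hT h4 (A.impl C) :=
  JThm.mp (JThm.mp (jax_thm JAx.ax2) (JThm.mp (jax_thm JAx.ax1) h2)) h1

/-- From ⊢R, get ⊢(R→S)→S. -/
lemma jthm_mpRev {R S : JForm} (h : JThm hT h4 R) :
    JThm hT h4 ((R.impl S).impl S) :=
  JThm.mp (JThm.mp (jax_thm JAx.ax2) (jthm_id (R.impl S)))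
    (JThm.mp (jax_thm JAx.ax1) h)

/-- From ⊢P→(R→S) and ⊢R get ⊢P→S. -/
lemma jthm_applyConst {P R S : JForm} (h1 : JThm hT h4 (P.impl (R.impl S)))
    (h2 : JThm hT h4 R) : JThm hT h4 (P.impl S) :=
  jthm_syll h1 (jthm_mpRev h2)

/-- From ⊢X→L, get ⊢(L→Q)→(X→Q). -/
lemma jthm_compL {X L Q : JForm} (h : JThm hT h4 (X.impl L)) :
    JThm hT h4 ((L.impl Q).impl (X.impl Q)) :=
  jthm_applyConst (jthm_syll (jax_thm JAx.ax1) (jax_thm JAx.ax2)) h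

/-- Internalization: every theorem is justified by some proof term. -/
lemma internalize {A : JForm} (h : JThm hT h4 A) :
    ∃ t : PrfTm, JThm hT h4 (JForm.jst t A) := by
  induction h with
  | can cs hax =>
      exact ⟨PrfTm.pconst 0, JThm.can (0 :: cs) hax⟩
  | mp _ _ ih1 ih2 =>
      obtain ⟨s, hs⟩ := ih1
      obtain ⟨t, ht⟩ := ih2
      exact ⟨PrfTm.app s t, JThm.mp (JThm.mp (jax_thm JAx.jk1) hs) ht⟩

/-- Lifting: if ⊢B→A then for any s there is t with ⊢ s:B → t:A. -/
lemma lifting {A B : JForm} (h : JThm hT h4 (B.impl A)) (s : PrfTm) :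
    ∃ t : PrfTm, JThm hT h4 ((JForm.jst s B).impl (JForm.jst t A)) := by
  obtain ⟨r, hr⟩ := internalize h
  exact ⟨PrfTm.app r s, JThm.mp (jax_thm JAx.jk1) hr⟩

/-- The propositional theorem (L1→(L2→P)) → ((L1∧L2)→P). -/
lemma jthm_uncurry (L1 L2 P : JForm) :
    JThm hT h4 ((L1.impl (L2.impl P)).impl ((L1.and L2).impl P)) := by
  have step1 : JThm hT h4 ((L1.impl (L2.impl P)).impl
      ((L1.and L2).impl (L2.impl P))) :=
    jthm_compL (jax_thm JAx.andE1)
  have step3 := jthm_syll step1 (jax_thm JAx.ax2)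
  exact jthm_applyConst step3 (jax_thm JAx.andE2)

end Helpers

/-- soundness of the local-update rule in JIK. -/
theorem local_update_soundness :
    (∀ A B C : JForm, JThm false false (A.impl (B.impl C)) →
      ∀ (μ : SatTm) (t : PrfTm), ∃ u : PrfTm,
        JThm false false (((JForm.sat μ A).impl (JForm.jst t B)).impl
          (JForm.jst u (A.impl C)))) ∧
    (∀ (L1 L2 P : JForm) (μ : SatTm) (t : PrfTm), ∃ u : PrfTm,
      JThm false false (((JForm.sat μ L1).impl (JForm.jst t (L2.impl P))).impl
        (JForm.jst u ((L1.and L2).impl P)))) := by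
  constructor
  · intro A B C h μ t
    have hAB : JThm false false ((A.impl B).impl (A.impl C)) :=
      JThm.mp (jax_thm JAx.ax2) h
    obtain ⟨u, hu⟩ := lifting hAB (PrfTm.upd μ t)
    exact ⟨u, jthm_syll (jax_thm JAx.jk4) hu⟩
  · intro L1 L2 P μ t
    obtain ⟨u, hu⟩ := lifting (jthm_uncurry L1 L2 P) (PrfTm.upd μ t)
    exact ⟨u, jthm_syll (jax_thm JAx.jk4) hu⟩

end JIKPaper
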